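/- For every n > 0, the number of planar rooted trees with 2n leaves that are invariant under the dendriform involution equals the super Catalan number C_n, i.e., |{t ∈ T_{2n-1} : t = t†}| = |T_n|. -/

import Mathlib

inductive PTree : Type where
  | leaf : PTree
  | node : List PTree → PTree

inductive Valid : PTree → Prop where
  | leaf : Valid .leaf
  | node : ∀ ts : List PTree, 2 ≤ ts.length → (∀ t ∈ ts, Valid t) → Valid (.node ts)

def leaves : PTree → ℕ
  | .leaf => 1
  | .node ts => (ts.attach.map (fun x => leaves x.1)).sum
decreasing_by
  simp_wf
  have := List.sizeOf_lt_of_mem x.2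
  omega

def dag : PTree → PTree
  | .leaf => .leaf
  | .node ts => .node ((ts.attach.map (fun x => dag x.1)).reverse)
decreasing_by
  simp_wf
  have := List.sizeOf_lt_of_mem x.2
  omega

/-- `up t r` grafts the root of `t` onto the leftmost leaf of `r`. -/
def up (t : PTree) : PTree → PTree
  | .leaf => t
  | .node [] => .node []
  | .node (r :: rs) => .node (up t r :: rs)

mutual
/-- `down t r` grafts the root of `r` onto the rightmost leaf of `t`. -/
def down : PTree → PTree → PTree
  | .leaf, r => r
  | .node ts, r => .node (downList ts r)

def downList : List PTree → PTree → List PTree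
  | [], _ => []
  | [t], r => [down t r]
  | t :: t' :: ts, r => t :: downList (t' :: ts) r
end
/-- `C n` is the number of planar rooted trees with `n+1` leaves in which
every internal vertex has at least two children. -/
noncomputable def C (n : ℕ) : ℕ := Nat.card {t : PTree // Valid t ∧ leaves t = n + 1}

/-! ### Auxiliary lemmas -/

lemma dag_leaf : dag .leaf = .leaf := by rw [dag]
lemma leaves_leaf : leaves .leaf = 1 := by rw [leaves]

lemma dag_node (ts : List PTree) : dag (.node ts) = .node ((ts.map dag).reverse) := by
  rw [dag]; congr 1; simp

lemma leaves_node (ts : List PTree) : leaves (.node ts) = (ts.map leaves).sum := by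
  rw [leaves]; congr 1; simp

/-- reversed dag of a list of trees -/
def rdag (l : List PTree) : List PTree := (l.map dag).reverse

lemma dag_node' (ts : List PTree) : dag (.node ts) = .node (rdag ts) := dag_node ts

lemma rdag_length (l : List PTree) : (rdag l).length = l.length := by simp [rdag]

lemma rdag_append (u v : List PTree) : rdag (u ++ v) = rdag v ++ rdag u := by simp [rdag]

lemma rdag_cons (a : PTree) (l : List PTree) : rdag (a :: l) = rdag l ++ [dag a] := by
  simp [rdag]

lemma dag_dag : ∀ t : PTree, dag (dag t) = t
  | .leaf => by simp [dag_leaf]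
  | .node ts => by
    rw [dag_node, dag_node, List.map_reverse, List.reverse_reverse, List.map_map]
    congr 1
    calc ts.map (dag ∘ dag) = ts.map id := List.map_congr_left (fun x hx => dag_dag x)
    _ = ts := List.map_id ts
decreasing_by
  have := List.sizeOf_lt_of_mem hx
  simp; omega

lemma rdag_rdag (l : List PTree) : rdag (rdag l) = l := by
  simp only [rdag, List.map_reverse, List.reverse_reverse, List.map_map]
  calc l.map (dag ∘ dag) = l.map id := List.map_congr_left (fun x _ => dag_dag x)
  _ = l := List.map_id l

lemma leaves_dag : ∀ t : PTree, leaves (dag t) = leaves t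
  | .leaf => by simp [dag_leaf]
  | .node ts => by
    rw [dag_node, leaves_node, leaves_node, List.map_reverse, List.sum_reverse, List.map_map]
    congr 1
    exact List.map_congr_left (fun x hx => leaves_dag x)
decreasing_by
  have := List.sizeOf_lt_of_mem hx
  simp; omega

lemma sum_rdag (l : List PTree) : ((rdag l).map leaves).sum = (l.map leaves).sum := by
  simp only [rdag, List.map_reverse, List.sum_reverse, List.map_map]
  congr 1
  exact List.map_congr_left (fun x _ => leaves_dag x)

lemma Valid.length_le {ts : List PTree} (h : Valid (.node ts)) : 2 ≤ ts.length := by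
  cases h with | node _ h1 h2 => exact h1

lemma Valid.mem {ts : List PTree} (h : Valid (.node ts)) : ∀ t ∈ ts, Valid t := by
  cases h with | node _ h1 h2 => exact h2

lemma valid_dag : ∀ t : PTree, Valid t → Valid (dag t)
  | .leaf, _ => by rw [dag_leaf]; exact Valid.leaf
  | .node ts, h => by
    rw [dag_node']
    refine Valid.node _ (by rw [rdag_length]; exact h.length_le) ?_
    intro t ht
    simp only [rdag, List.mem_reverse, List.mem_map] at ht
    obtain ⟨a, ha, rfl⟩ := ht
    exact valid_dag a (h.mem a ha)
decreasing_by
  have := List.sizeOf_lt_of_mem ha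
  simp; omega

/-! ### Palindrome decomposition -/

lemma palindrome_even (ts : List PTree) (m : ℕ) (hk : ts.length = 2 * m)
    (h : rdag ts = ts) : rdag (ts.take m) = ts.drop m := by
  have h1 : rdag (ts.drop m) ++ rdag (ts.take m) = ts.take m ++ ts.drop m := by
    calc rdag (ts.drop m) ++ rdag (ts.take m)
        = rdag (ts.take m ++ ts.drop m) := (rdag_append _ _).symm
    _ = rdag ts := by rw [List.take_append_drop]
    _ = ts := h
    _ = ts.take m ++ ts.drop m := (List.take_append_drop m ts).symm
  have hlen : (rdag (ts.drop m)).length = (ts.take m).length := by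
    rw [rdag_length, List.length_drop, List.length_take]; omega
  exact (List.append_inj h1 hlen).2

lemma palindrome_odd (ts : List PTree) (m : ℕ) (hk : ts.length = 2 * m + 1)
    (h : rdag ts = ts) :
    dag (ts[m]'(by omega)) = ts[m]'(by omega) ∧ rdag (ts.take m) = ts.drop (m + 1) := by
  have hm : m < ts.length := by omega
  have hsplit : ts = ts.take m ++ ts[m] :: ts.drop (m + 1) := by
    conv_lhs => rw [← List.take_append_drop m ts, List.drop_eq_getElem_cons hm]
  have h1 : (rdag (ts.drop (m + 1)) ++ [dag ts[m]]) ++ rdag (ts.take m)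
      = (ts.take m ++ [ts[m]]) ++ ts.drop (m + 1) := by
    calc (rdag (ts.drop (m + 1)) ++ [dag ts[m]]) ++ rdag (ts.take m)
        = rdag (ts.take m ++ ts[m] :: ts.drop (m + 1)) := by
          rw [rdag_append, rdag_cons]
    _ = rdag ts := by rw [← hsplit]
    _ = ts := h
    _ = ts.take m ++ ts[m] :: ts.drop (m + 1) := hsplit
    _ = (ts.take m ++ [ts[m]]) ++ ts.drop (m + 1) := by simp
  have hlen1 : (rdag (ts.drop (m + 1)) ++ [dag ts[m]]).length
      = (ts.take m ++ [ts[m]]).length := by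
    simp [rdag_length]; omega
  obtain ⟨h2, h3⟩ := List.append_inj h1 hlen1
  have hlen2 : (rdag (ts.drop (m + 1))).length = (ts.take m).length := by
    rw [rdag_length, List.length_drop, List.length_take]; omega
  obtain ⟨h4, h5⟩ := List.append_inj h2 hlen2
  refine ⟨by injection h5, ?_⟩
  rw [← h4, rdag_rdag]

/-! ### The maps -/

def g : PTree → PTree
  | .leaf => .leaf
  | .node ss =>
    match h : ss.getLast? with
    | none => .node []
    | some .leaf => .node (ss.dropLast ++ rdag ss.dropLast)
    | some (.node cs) => .node (ss.dropLast ++ g (.node cs) :: rdag ss.dropLast)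
decreasing_by
  simp_wf
  have hm := List.mem_of_getLast? h
  have := List.sizeOf_lt_of_mem hm
  simp at this; omega

lemma g_leaf : g .leaf = .leaf := by rw [g.eq_def]

lemma g_concat_leaf (as : List PTree) :
    g (.node (as ++ [.leaf])) = .node (as ++ rdag as) := by
  rw [g.eq_def]
  split
  · rename_i heq; exact absurd heq (by simp)
  · rename_i ss heq
    injection heq with heq'
    subst heq'
    split
    · rename_i h; rw [List.getLast?_concat] at h; simp at h
    · rw [List.dropLast_concat]
    · rename_i h; rw [List.getLast?_concat] at h; simp at h

lemma g_concat_node (as cs : List PTree) :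
    g (.node (as ++ [.node cs])) = .node (as ++ g (.node cs) :: rdag as) := by
  rw [g.eq_def]
  split
  · rename_i heq; exact absurd heq (by simp)
  · rename_i ss heq
    injection heq with heq'
    subst heq'
    split
    · rename_i h; rw [List.getLast?_concat] at h; simp at h
    · rename_i h; rw [List.getLast?_concat] at h; simp at h
    · rename_i h
      rw [List.getLast?_concat] at h
      rw [List.dropLast_concat]
      cases h; rfl

def f : PTree → PTree
  | .leaf => .leaf
  | .node ts =>
    if h2 : ts.length % 2 = 0 then .node (ts.take (ts.length / 2) ++ [.leaf])
    else .node (ts.take (ts.length / 2) ++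
      [f (ts[ts.length / 2]'(Nat.div_lt_self (by omega) one_lt_two))])
decreasing_by
  simp_wf
  have hpos : 0 < ts.length := by omega
  have := List.sizeOf_lt_of_mem (List.getElem_mem (Nat.div_lt_self hpos one_lt_two))
  omega

lemma f_leaf : f .leaf = .leaf := by rw [f]

lemma f_even (ts : List PTree) (h2 : ts.length % 2 = 0) :
    f (.node ts) = .node (ts.take (ts.length / 2) ++ [.leaf]) := by
  rw [f.eq_def]
  split
  · rename_i heq; exact absurd heq (by simp)
  · rename_i ss heq
    injection heq with heq'
    subst heq'
    rw [dif_pos h2]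

lemma f_odd (ts : List PTree) (h2 : ¬ ts.length % 2 = 0) :
    f (.node ts) = .node (ts.take (ts.length / 2) ++
      [f (ts[ts.length / 2]'(Nat.div_lt_self (by omega) one_lt_two))]) := by
  rw [f.eq_def]
  split
  · rename_i heq; exact absurd heq (by simp)
  · rename_i ss heq
    injection heq with heq'
    subst heq'
    rw [dif_neg h2]

lemma f_valid : ∀ t : PTree, Valid t → Valid (f t)
  | .leaf, _ => by rw [f_leaf]; exact Valid.leaf
  | .node ts, h => by
    have hlen := h.length_le
    have hmem := h.mem
    by_cases h2 : ts.length % 2 = 0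
    · rw [f_even ts h2]
      refine Valid.node _ ?_ ?_
      · simp; omega
      · intro t ht
        rcases List.mem_append.1 ht with ht | ht
        · exact hmem t (List.take_subset _ _ ht)
        · simp at ht; subst ht; exact Valid.leaf
    · rw [f_odd ts h2]
      refine Valid.node _ ?_ ?_
      · simp; omega
      · intro t ht
        rcases List.mem_append.1 ht with ht | ht
        · exact hmem t (List.take_subset _ _ ht)
        · simp at ht; subst ht
          exact f_valid _ (hmem _ (List.getElem_mem _))
decreasing_by
  have hpos : 0 < ts.length := by omega
  have := List.sizeOf_lt_of_mem (List.getElem_mem (Nat.div_lt_self hpos one_lt_two))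
  simp; omega

lemma f_leaves : ∀ t : PTree, Valid t → dag t = t → 2 ∣ leaves t →
    2 * leaves (f t) = leaves t + 2
  | .leaf, _, _, hdvd => by rw [leaves_leaf] at hdvd; omega
  | .node ts, h, hdag, hdvd => by
    have hlen := h.length_le
    have hmem := h.mem
    have hpal : rdag ts = ts := by
      rw [dag_node'] at hdag
      injection hdag
    by_cases h2 : ts.length % 2 = 0
    · obtain ⟨m, hm⟩ : ∃ m, ts.length = 2 * m := ⟨ts.length / 2, by omega⟩
      have hdrop := palindrome_even ts m hm hpal
      have hdiv : ts.length / 2 = m := by omega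
      rw [f_even ts h2, hdiv, leaves_node, leaves_node]
      conv_rhs => rw [← List.take_append_drop m ts, ← hdrop]
      simp only [List.map_append, List.sum_append, List.map_cons, List.map_nil,
        List.sum_cons, List.sum_nil, leaves_leaf, sum_rdag]
      omega
    · obtain ⟨m, hm⟩ : ∃ m, ts.length = 2 * m + 1 := ⟨ts.length / 2, by omega⟩
      obtain ⟨hdc, hdrop⟩ := palindrome_odd ts m hm hpal
      have hdiv : ts.length / 2 = m := by omega
      have hmlt : m < ts.length := by omega
      have hsplit : ts = ts.take m ++ ts[m] :: ts.drop (m + 1) := by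
        conv_lhs => rw [← List.take_append_drop m ts, List.drop_eq_getElem_cons hmlt]
      have hsum : leaves (.node ts)
          = 2 * ((ts.take m).map leaves).sum + leaves ts[m] := by
        rw [leaves_node]
        conv_lhs => rw [hsplit]
        simp only [List.map_append, List.sum_append, List.map_cons, List.sum_cons, ← hdrop,
          sum_rdag]
        omega
      have hdvdc : 2 ∣ leaves (ts[m]'hmlt) := by
        rw [leaves_node] at hdvd
        rw [leaves_node] at hsum
        omega
      have ih := f_leaves (ts[m]'hmlt) (hmem _ (List.getElem_mem hmlt)) hdc hdvdc
      rw [f_odd ts h2, leaves_node]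
      simp only [List.map_append, List.sum_append, List.map_cons, List.map_nil,
        List.sum_cons, List.sum_nil]
      rw [hsum]
      simp only [hdiv]
      omega
decreasing_by
  have := List.sizeOf_lt_of_mem (List.getElem_mem hmlt)
  simp; omega

lemma g_valid : ∀ t : PTree, Valid t → Valid (g t)
  | .leaf, _ => by rw [g_leaf]; exact Valid.leaf
  | .node ss, h => by
    have hlen := h.length_le
    have hmem := h.mem
    obtain hnil | ⟨as, b, rfl⟩ := ss.eq_nil_or_concat
    · subst hnil; simp at hlen
    · rw [List.concat_eq_append] at *
      have hlen' : 1 ≤ as.length := by simp at hlen; omega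
      cases b with
      | leaf =>
        rw [g_concat_leaf]
        refine Valid.node _ (by simp [rdag_length]; omega) ?_
        intro t ht
        rcases List.mem_append.1 ht with ht | ht
        · exact hmem t (by simp [ht])
        · simp only [rdag, List.mem_reverse, List.mem_map] at ht
          obtain ⟨a, ha, rfl⟩ := ht
          exact valid_dag a (hmem a (by simp [ha]))
      | node cs =>
        rw [g_concat_node]
        refine Valid.node _ (by simp [rdag_length]; omega) ?_
        intro t ht
        rcases List.mem_append.1 ht with ht | ht
        · exact hmem t (by simp [ht])
        · rcases List.mem_cons.1 ht with rfl | ht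
          · exact g_valid _ (hmem _ (by simp))
          · simp only [rdag, List.mem_reverse, List.mem_map] at ht
            obtain ⟨a, ha, rfl⟩ := ht
            exact valid_dag a (hmem a (by simp [ha]))
decreasing_by
  all_goals
    subst_vars
    have h1 : PTree.node cs ∈ as ++ [PTree.node cs] := by simp
    have h2 := List.sizeOf_lt_of_mem h1
    simp at h2 ⊢
    omega

lemma g_selfdual : ∀ t : PTree, Valid t → dag (g t) = g t
  | .leaf, _ => by rw [g_leaf, dag_leaf]
  | .node ss, h => by
    have hmem := h.mem
    obtain hnil | ⟨as, b, rfl⟩ := ss.eq_nil_or_concat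
    · subst hnil; have := h.length_le; simp at this
    · rw [List.concat_eq_append] at *
      cases b with
      | leaf =>
        rw [g_concat_leaf, dag_node']
        congr 1
        rw [rdag_append, rdag_rdag]
      | node cs =>
        rw [g_concat_node, dag_node']
        congr 1
        have ih : dag (g (.node cs)) = g (.node cs) :=
          g_selfdual _ (hmem _ (by simp))
        rw [show (as ++ g (.node cs) :: rdag as) = (as ++ [g (.node cs)]) ++ rdag as by simp,
          rdag_append, rdag_append, rdag_rdag, rdag_cons, ih]
        simp [rdag]
decreasing_by
  subst_vars
  have h1 : PTree.node cs ∈ as ++ [PTree.node cs] := by simp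
  have h2 := List.sizeOf_lt_of_mem h1
  simp at h2 ⊢
  omega

lemma g_leaves : ∀ ss : List PTree, Valid (.node ss) →
    leaves (g (.node ss)) + 2 = 2 * leaves (.node ss)
  | ss, h => by
    have hlen := h.length_le
    have hmem := h.mem
    obtain hnil | ⟨as, b, rfl⟩ := ss.eq_nil_or_concat
    · subst hnil; simp at hlen
    · rw [List.concat_eq_append] at *
      cases b with
      | leaf =>
        rw [g_concat_leaf, leaves_node, leaves_node]
        simp only [List.map_append, List.sum_append, List.map_cons, List.map_nil,
          List.sum_cons, List.sum_nil, leaves_leaf, sum_rdag]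
        omega
      | node cs =>
        have ih := g_leaves cs (hmem _ (by simp))
        rw [g_concat_node, leaves_node, leaves_node]
        simp only [List.map_append, List.sum_append, List.map_cons, List.map_nil,
          List.sum_cons, List.sum_nil, sum_rdag]
        omega
termination_by ss => sizeOf ss
decreasing_by
  subst_vars
  have h1 : PTree.node cs ∈ as ++ [PTree.node cs] := by simp
  have h2 := List.sizeOf_lt_of_mem h1
  simp at h2 ⊢
  omega

lemma take_left' {l₁ l₂ : List PTree} {n : ℕ} (h : l₁.length = n) :
    (l₁ ++ l₂).take n = l₁ := by subst h; exact List.take_left (l₁ := l₁) (l₂ := l₂)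

lemma fg : ∀ t : PTree, Valid t → f (g t) = t
  | .leaf, _ => by rw [g_leaf, f_leaf]
  | .node ss, h => by
    have hlen := h.length_le
    have hmem := h.mem
    obtain hnil | ⟨as, b, rfl⟩ := ss.eq_nil_or_concat
    · subst hnil; simp at hlen
    · rw [List.concat_eq_append] at *
      have hlen' : 1 ≤ as.length := by simp at hlen; omega
      cases b with
      | leaf =>
        rw [g_concat_leaf]
        have hL : (as ++ rdag as).length = 2 * as.length := by simp [rdag_length]; omega
        have h2 : (as ++ rdag as).length % 2 = 0 := by omega
        rw [f_even _ h2]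
        have hdiv : (as ++ rdag as).length / 2 = as.length := by omega
        rw [hdiv, take_left' rfl]
      | node cs =>
        rw [g_concat_node]
        have hL : (as ++ g (.node cs) :: rdag as).length = 2 * as.length + 1 := by
          simp [rdag_length]; omega
        have h2 : ¬ (as ++ g (.node cs) :: rdag as).length % 2 = 0 := by omega
        rw [f_odd _ h2]
        have hdiv : (as ++ g (.node cs) :: rdag as).length / 2 = as.length := by omega
        have hget : (as ++ g (.node cs) :: rdag as)[(as ++ g (.node cs) :: rdag as).length / 2]'(Nat.div_lt_self (by omega) one_lt_two)
            = g (.node cs) := by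
          simp only [hdiv]
          rw [List.getElem_append_right (le_refl as.length)]
          simp
        rw [hget, hdiv, take_left' rfl]
        have ih := fg (.node cs) (hmem _ (by simp))
        rw [ih]
decreasing_by
  subst_vars
  have h1 : PTree.node cs ∈ as ++ [PTree.node cs] := by simp
  have h2 := List.sizeOf_lt_of_mem h1
  simp at h2 ⊢
  omega

lemma f_node_shape (cs : List PTree) : ∃ ds, f (.node cs) = .node ds := by
  by_cases h2 : cs.length % 2 = 0
  · rw [f_even cs h2]; exact ⟨_, rfl⟩
  · rw [f_odd cs h2]; exact ⟨_, rfl⟩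

lemma gf : ∀ t : PTree, Valid t → dag t = t → 2 ∣ leaves t → g (f t) = t
  | .leaf, _, _, hdvd => by rw [leaves_leaf] at hdvd; omega
  | .node ts, h, hdag, hdvd => by
    have hlen := h.length_le
    have hmem := h.mem
    have hpal : rdag ts = ts := by
      rw [dag_node'] at hdag
      injection hdag
    by_cases h2 : ts.length % 2 = 0
    · obtain ⟨m, hm⟩ : ∃ m, ts.length = 2 * m := ⟨ts.length / 2, by omega⟩
      have hdrop := palindrome_even ts m hm hpal
      have hdiv : ts.length / 2 = m := by omega
      rw [f_even ts h2, hdiv, g_concat_leaf, hdrop, List.take_append_drop]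
    · obtain ⟨m, hm⟩ : ∃ m, ts.length = 2 * m + 1 := ⟨ts.length / 2, by omega⟩
      obtain ⟨hdc, hdrop⟩ := palindrome_odd ts m hm hpal
      have hdiv : ts.length / 2 = m := by omega
      have hmlt : m < ts.length := by omega
      have hsplit : ts = ts.take m ++ ts[m] :: ts.drop (m + 1) := by
        conv_lhs => rw [← List.take_append_drop m ts, List.drop_eq_getElem_cons hmlt]
      have hsum : leaves (.node ts)
          = 2 * ((ts.take m).map leaves).sum + leaves ts[m] := by
        rw [leaves_node]
        conv_lhs => rw [hsplit]
        simp only [List.map_append, List.sum_append, List.map_cons, List.sum_cons, ← hdrop,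
          sum_rdag]
        omega
      have hdvdc : 2 ∣ leaves (ts[m]'hmlt) := by
        rw [leaves_node] at hdvd
        rw [leaves_node] at hsum
        omega
      have hvc := hmem _ (List.getElem_mem hmlt)
      -- the middle tree cannot be a leaf
      rcases hc : ts[m]'hmlt with _ | cs
      · rw [hc] at hdvdc; rw [leaves_leaf] at hdvdc; omega
      · rw [f_odd ts h2]
        simp only [hdiv, hc]
        obtain ⟨ds, hds⟩ := f_node_shape cs
        rw [hds, g_concat_node, ← hds]
        have ih := gf (.node cs) (hc ▸ hvc) (hc ▸ hdc) (hc ▸ hdvdc)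
        rw [ih, hdrop]
        rw [← hc]
        exact congrArg PTree.node hsplit.symm
decreasing_by
  have h1 := List.sizeOf_lt_of_mem (List.getElem_mem hmlt)
  rw [hc] at h1
  simp at h1 ⊢
  omega

/-- For n > 0, the number of planar rooted trees with 2n leaves invariant under
the dendriform involution equals the super Catalan number C n. -/
theorem card_involutive_even_leaves (n : ℕ) (hn : 0 < n) :
    Nat.card {t : PTree // Valid t ∧ leaves t = 2 * n ∧ dag t = t} = C n := by
  rw [C]
  exact Nat.card_congr
    { toFun := fun x => ⟨f x.1, f_valid _ x.2.1, by
        have h2 := f_leaves x.1 x.2.1 x.2.2.2 (by rw [x.2.2.1]; exact Dvd.intro n rfl)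
        have h3 := x.2.2.1
        omega⟩
      invFun := fun y => ⟨g y.1, g_valid _ y.2.1, by
        rcases y with ⟨t, hv, hl⟩
        cases t with
        | leaf => rw [leaves_leaf] at hl; omega
        | node ss =>
          have hg := g_leaves ss hv
          rw [hl] at hg
          show leaves (g (PTree.node ss)) = 2 * n
          omega,
        g_selfdual _ y.2.1⟩
      left_inv := fun x => Subtype.ext (gf x.1 x.2.1 x.2.2.2 (by rw [x.2.2.1]; exact Dvd.intro n rfl))
      right_inv := fun y => Subtype.ext (fg y.1 y.2.1) }
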